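/- The δ-GLMB update preserves the δ-GLMB form and is properly normalized: if the prior weights w^{(I,ξ)} are nonnegative and each η_Z^{(ξ,θ)}(ℓ) = ∫ p^{(ξ)}(x,ℓ) ψ_Z(x,ℓ;θ) dx > 0, then the posterior weights w^{(I,ξ,θ)} = w^{(I,ξ)} [η_Z^{(ξ,θ)}]^I / (Σ_{(I',ξ')} Σ_{θ'∈Θ(I')} w^{(I',ξ')} [η_Z^{(ξ',θ')}]^{I'}) sum to one over (I,ξ,θ) with θ ∈ Θ(I), and each posterior density p^{(ξ,θ)}(x,ℓ) = p^{(ξ)}(x,ℓ) ψ_Z(x,ℓ;θ) / η_Z^{(ξ,θ)}(ℓ) is a probability density on 𝕏. -/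
import Mathlib


open MeasureTheory

/-- the δ-GLMB update preserves the δ-GLMB form and is properly
normalized: the posterior weights
`w^{(I,ξ,θ)} ∝ w^{(I,ξ)} [η_Z^{(ξ,θ)}]^I` sum to one over `(I,ξ,θ)` with
`θ ∈ Θ(I)`, and each posterior density
`p^{(ξ,θ)}(x,ℓ) = p^{(ξ)}(x,ℓ) ψ_Z(x,ℓ;θ) / η_Z^{(ξ,θ)}(ℓ)` is a probability
density on `𝕏`.  Association maps `θ : I → {0,...,M}` are encoded as maps
`θ : 𝕃 → Fin (M+1)` vanishing outside `I`. -/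
theorem dglmb_update_normalized
    {𝕏 𝕃 Ξ : Type*} [MeasurableSpace 𝕏] [Fintype 𝕃] [DecidableEq 𝕃] [Fintype Ξ]
    (μ : Measure 𝕏) (M : ℕ)
    (w : Finset 𝕃 → Ξ → ℝ) (p : Ξ → 𝕏 → 𝕃 → ℝ)
    (ψ : 𝕏 → 𝕃 → (𝕃 → Fin (M + 1)) → ℝ)
    (hw0 : ∀ I ξ, 0 ≤ w I ξ)
    (hp : ∀ ξ ℓ, (∀ x, 0 ≤ p ξ x ℓ) ∧ ∫ x, p ξ x ℓ ∂μ = 1)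
    (hψ : ∀ x ℓ θ, 0 ≤ ψ x ℓ θ)
    (η : Ξ → (𝕃 → Fin (M + 1)) → 𝕃 → ℝ)
    (hη : ∀ ξ θ ℓ, η ξ θ ℓ = ∫ x, p ξ x ℓ * ψ x ℓ θ ∂μ)
    (hηpos : ∀ ξ θ ℓ, 0 < η ξ θ ℓ)
    (Θ : Finset 𝕃 → Finset (𝕃 → Fin (M + 1)))
    (hΘ : ∀ I, Θ I = Finset.univ.filter (fun θ : 𝕃 → Fin (M + 1) =>
      (∀ i ∈ I, ∀ i' ∈ I, θ i = θ i' → θ i ≠ 0 → i = i') ∧ ∀ i ∉ I, θ i = 0))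
    (D : ℝ)
    (hD : D = ∑ I : Finset 𝕃, ∑ ξ : Ξ, ∑ θ ∈ Θ I, w I ξ * ∏ ℓ ∈ I, η ξ θ ℓ)
    (hDpos : 0 < D) :
    (∑ I : Finset 𝕃, ∑ ξ : Ξ, ∑ θ ∈ Θ I, (w I ξ * ∏ ℓ ∈ I, η ξ θ ℓ) / D = 1) ∧
    (∀ ξ θ ℓ,
      (∀ x, 0 ≤ p ξ x ℓ * ψ x ℓ θ / η ξ θ ℓ) ∧
      ∫ x, p ξ x ℓ * ψ x ℓ θ / η ξ θ ℓ ∂μ = 1) := by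
  constructor
  · simp only [← Finset.sum_div]
    rw [← hD, div_self hDpos.ne']
  · intro ξ θ ℓ
    refine ⟨fun x => div_nonneg (mul_nonneg ((hp ξ ℓ).1 x) (hψ x ℓ θ)) (hηpos ξ θ ℓ).le, ?_⟩
    simp only [div_eq_mul_inv]
    rw [integral_mul_const, ← hη, mul_inv_cancel₀ (hηpos ξ θ ℓ).ne']
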